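/- Functional equation for the Watson series: Let q be a complex number with |q| < 1 and let a be a complex number with a q^j ≠ 1 for every integer j ≥ 0. Define f(a) = ∑_{k=0}^∞ (−1)^k (1 − a q^{2k}) a^{2k} q^{k(5k−1)/2} / ((q;q)_k · (a q^k;q)_∞), which converges absolutely. Then f(a) = f(aq) + a q · f(a q²). -/

import Mathlib

/-- The finite q-Pochhammer symbol `(a; q)_k = ∏_{i=0}^{k-1} (1 - a q^i)`. -/
noncomputable def qPoch (q a : ℂ) (k : ℕ) : ℂ := ∏ i ∈ Finset.range k, (1 - a * q ^ i)

/-- The infinite q-Pochhammer symbol `(a; q)_∞ = ∏_{i=0}^{∞} (1 - a q^i)`. -/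
noncomputable def qPochInf (q a : ℂ) : ℂ := ∏' i : ℕ, (1 - a * q ^ i)

/-- The summand `F_k(a)` of the Watson series. -/
noncomputable def F (q a : ℂ) (k : ℕ) : ℂ :=
  (-1) ^ k * (1 - a * q ^ (2 * k)) * a ^ (2 * k) * q ^ (k * (5 * k - 1) / 2) /
    (qPoch q q k * qPochInf q (a * q ^ k))

/-- The Watson series `f(a)`. -/
noncomputable def watsonF (q a : ℂ) : ℂ := ∑' k : ℕ, F q a k

/-!
The summands telescope. With the weight
`W_k = (-1)^k a^{2k} q^{k(5k-1)/2} / ((q;q)_k (aq^k;q)_∞)` one has `F_k(a) = (1 - aq^{2k}) W_k`,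
and `S_k = (1 - q^k)(1 + q^k - aq^{2k}) W_k` satisfies
`F_k(a) - F_k(aq) - aq F_k(aq²) = S_k - S_{k+1}`, a rational identity in `a, q, q^k` once
`(aq^k;q)_∞ = (1 - aq^k)(1 - aq^{k+1})(aq^{k+2};q)_∞` is substituted.
Since `(q;q)_k → (q;q)_∞ ≠ 0`, `(aq^k;q)_∞ → 1` and `|q|^{k(5k-1)/2} ≤ |q|^{k²}`, the weights are
absolutely summable; summing the identity over `k` and using `S_0 = 0` gives the functional
equation.
-/

open Filter Topology Asymptotics

lemma watson_exponent_succ (k : ℕ) :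
    (k + 1) * (5 * (k + 1) - 1) / 2 = k * (5 * k - 1) / 2 + (5 * k + 2) := by
  have h : (k + 1) * (5 * (k + 1) - 1) = k * (5 * k - 1) + (5 * k + 2) * 2 := by
    rcases k with _ | j
    · rfl
    · rw [show 5 * (j + 1 + 1) - 1 = 5 * j + 9 by omega, show 5 * (j + 1) - 1 = 5 * j + 4 by omega]
      ring
  rw [h, Nat.add_mul_div_right _ _ two_pos]

lemma mul_self_le_watson_exponent (k : ℕ) : k * k ≤ k * (5 * k - 1) / 2 := by
  rw [Nat.le_div_iff_mul_le two_pos]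
  rcases k with _ | j
  · rfl
  · rw [show 5 * (j + 1) - 1 = 5 * j + 4 by omega]
    nlinarith

theorem tendsto_pow_two_mul_nhds_zero {R : Type*} [NormedRing R] {x : R} (hx : ‖x‖ < 1) :
    Tendsto (fun k => x ^ (2 * k)) atTop (𝓝 0) :=
  (tendsto_pow_atTop_nhds_zero_of_norm_lt_one hx).comp (tendsto_id.const_mul_atTop' two_pos)

theorem summable_pow_self_of_tendsto_zero {r : ℕ → ℝ} (hr0 : ∀ k, 0 ≤ r k)
    (hr : Tendsto r atTop (𝓝 0)) : Summable fun k => r k ^ k := by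
  refine Summable.of_norm_bounded_eventually_nat
    (summable_geometric_of_lt_one (by norm_num : (0 : ℝ) ≤ 1 / 2) (by norm_num)) ?_
  filter_upwards [hr.eventually_le_const (by norm_num : (0 : ℝ) < 1 / 2)] with k hk
  rw [Real.norm_of_nonneg (pow_nonneg (hr0 k) k)]
  exact pow_le_pow_left₀ (hr0 k) hk k

theorem summable_norm_mul_of_tendsto {R : Type*} [SeminormedRing R] {c w : ℕ → R} {l : R}
    (hc : Tendsto c atTop (𝓝 l)) (hw : Summable fun k => ‖w k‖) :
    Summable fun k => ‖c k * w k‖ :=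
  summable_of_isBigO_nat hw <|
    ((hc.isBigO_one ℝ).mul (isBigO_norm_right.2 (isBigO_refl w atTop))).norm_left.congr_right
      fun _ => one_mul _

theorem tsum_sub_succ {G : Type*} [AddCommGroup G] [TopologicalSpace G] [IsTopologicalAddGroup G]
    [T2Space G] {f : ℕ → G} (hf : Summable f) : ∑' k, (f k - f (k + 1)) = f 0 := by
  rw [hf.tsum_sub ((summable_nat_add_iff 1).2 hf), hf.tsum_eq_zero_add, add_sub_cancel_right]

section QPochhammer

variable {q : ℂ}

lemma qPoch_ne_zero {x : ℂ} (hx : ∀ n, x * q ^ n ≠ 1) (k : ℕ) : qPoch q x k ≠ 0 :=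
  Finset.prod_ne_zero_iff.2 fun n _ => sub_ne_zero.2 (hx n).symm

lemma mul_pow_ne_one_of_norm_lt_one (hq : ‖q‖ < 1) (n : ℕ) : q * q ^ n ≠ 1 := by
  rw [← pow_succ']
  intro h
  simpa [← norm_pow, h] using pow_lt_one₀ (norm_nonneg q) hq n.succ_ne_zero

variable (hq : ‖q‖ < 1)
include hq

lemma summable_norm_mul_pow (x : ℂ) : Summable fun n => ‖x * q ^ n‖ := by
  simpa only [norm_mul, norm_pow] using
    (summable_geometric_of_lt_one (norm_nonneg q) hq).mul_left ‖x‖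

lemma multipliable_one_sub_mul_pow (x : ℂ) : Multipliable fun n => 1 - x * q ^ n := by
  simpa only [sub_eq_add_neg] using
    multipliable_one_add_of_summable (by simpa only [norm_neg] using summable_norm_mul_pow hq x)

lemma qPochInf_ne_zero {x : ℂ} (hx : ∀ n, x * q ^ n ≠ 1) : qPochInf q x ≠ 0 := by
  simpa only [qPochInf, sub_eq_add_neg] using
    tprod_one_add_ne_zero_of_summable
      (fun n => by simpa [← sub_eq_add_neg, sub_eq_zero] using (hx n).symm)
      (by simpa only [norm_neg] using summable_norm_mul_pow hq x)

lemma qPoch_mul_qPochInf (x : ℂ) (k : ℕ) :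
    qPoch q x k * qPochInf q (x * q ^ k) = qPochInf q x := by
  have hshift : ∀ n, 1 - x * q ^ (n + k) = 1 - x * q ^ k * q ^ n := fun n => by ring
  have h := Multipliable.prod_mul_tprod_nat_mul' (f := fun n => 1 - x * q ^ n) (k := k)
    (by simpa only [hshift] using multipliable_one_sub_mul_pow hq (x * q ^ k))
  simpa only [qPoch, qPochInf, hshift] using h

lemma one_sub_mul_qPochInf_mul (x : ℂ) : (1 - x) * qPochInf q (x * q) = qPochInf q x := by
  simpa [qPoch] using qPoch_mul_qPochInf hq x 1

lemma tendsto_qPoch (x : ℂ) : Tendsto (qPoch q x) atTop (𝓝 (qPochInf q x)) :=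
  (multipliable_one_sub_mul_pow hq x).tendsto_prod_tprod_nat

lemma tendsto_qPochInf_mul_pow {x : ℂ} (hx : ∀ n, x * q ^ n ≠ 1) :
    Tendsto (fun k => qPochInf q (x * q ^ k)) atTop (𝓝 1) := by
  have h := (tendsto_const_nhds (x := qPochInf q x)).div (tendsto_qPoch hq x)
    (qPochInf_ne_zero hq hx)
  rw [div_self (qPochInf_ne_zero hq hx)] at h
  refine h.congr fun k => ?_
  rw [Pi.div_apply, ← qPoch_mul_qPochInf hq x k, mul_div_cancel_left₀ _ (qPoch_ne_zero hx k)]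

end QPochhammer

noncomputable def watsonWeight (q a : ℂ) (k : ℕ) : ℂ :=
  (-1) ^ k * a ^ (2 * k) * q ^ (k * (5 * k - 1) / 2) / (qPoch q q k * qPochInf q (a * q ^ k))

noncomputable def watsonTelescope (q a : ℂ) (k : ℕ) : ℂ :=
  (1 - q ^ k) * (1 + q ^ k - a * q ^ (2 * k)) * watsonWeight q a k

lemma F_eq_mul_watsonWeight (q a : ℂ) (k : ℕ) :
    F q a k = (1 - a * q ^ (2 * k)) * watsonWeight q a k := by
  rw [F, watsonWeight]
  ring

section WatsonSeries

variable {q a : ℂ} (hq : ‖q‖ < 1) (ha : ∀ n, a * q ^ n ≠ 1)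
include hq ha

lemma watsonWeight_isBigO :
    watsonWeight q a =O[atTop] fun k => (‖a‖ ^ 2 * ‖q‖ ^ k) ^ k := by
  have hden : Tendsto (fun k => (qPoch q q k * qPochInf q (a * q ^ k))⁻¹) atTop
      (𝓝 (qPochInf q q * 1)⁻¹) :=
    ((tendsto_qPoch hq q).mul (tendsto_qPochInf_mul_pow hq ha)).inv₀
      (mul_ne_zero (qPochInf_ne_zero hq (mul_pow_ne_one_of_norm_lt_one hq)) one_ne_zero)
  have hnum : (fun k => (-1) ^ k * a ^ (2 * k) * q ^ (k * (5 * k - 1) / 2)) =O[atTop]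
      fun k => (‖a‖ ^ 2 * ‖q‖ ^ k) ^ k := by
    refine IsBigO.of_bound 1 (Eventually.of_forall fun k => ?_)
    rw [one_mul, Real.norm_of_nonneg (by positivity), mul_pow, ← pow_mul, ← pow_mul]
    simp only [norm_mul, norm_pow, norm_neg, norm_one, one_pow, one_mul]
    exact mul_le_mul_of_nonneg_left
      (pow_le_pow_of_le_one (norm_nonneg q) hq.le (mul_self_le_watson_exponent k)) (by positivity)
  exact (hnum.mul (hden.isBigO_one ℝ)).congr (fun _ => (div_eq_mul_inv _ _).symm)
    (fun _ => mul_one _)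

lemma summable_norm_watsonWeight : Summable fun k => ‖watsonWeight q a k‖ := by
  refine summable_of_isBigO_nat ?_ (watsonWeight_isBigO hq ha).norm_left
  refine summable_pow_self_of_tendsto_zero (fun k => by positivity) ?_
  simpa using (tendsto_pow_atTop_nhds_zero_of_lt_one (norm_nonneg q) hq).const_mul (‖a‖ ^ 2)

lemma summable_norm_F : Summable fun k => ‖F q a k‖ := by
  simpa only [F_eq_mul_watsonWeight] using summable_norm_mul_of_tendsto
    (((tendsto_pow_two_mul_nhds_zero hq).const_mul a).const_sub 1)
    (summable_norm_watsonWeight hq ha)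

lemma summable_watsonTelescope : Summable (watsonTelescope q a) := by
  have hqk := tendsto_pow_atTop_nhds_zero_of_norm_lt_one hq
  exact (summable_norm_mul_of_tendsto ((hqk.const_sub 1).mul
    ((hqk.const_add 1).sub ((tendsto_pow_two_mul_nhds_zero hq).const_mul a)))
    (summable_norm_watsonWeight hq ha)).of_norm

lemma F_sub_eq_watsonTelescope_sub (k : ℕ) :
    F q a k - (F q (a * q) k + a * q * F q (a * q ^ 2) k) =
      watsonTelescope q a k - watsonTelescope q a (k + 1) := by
  have hshift (j : ℕ) :
      qPochInf q (a * q ^ j) = (1 - a * q ^ j) * qPochInf q (a * q ^ (j + 1)) := by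
    rw [pow_succ, ← mul_assoc, one_sub_mul_qPochInf_mul hq]
  have hP : qPoch q q k ≠ 0 := qPoch_ne_zero (mul_pow_ne_one_of_norm_lt_one hq) k
  have hQ : qPochInf q (a * q ^ (k + 1 + 1)) ≠ 0 :=
    qPochInf_ne_zero hq fun n => by rw [mul_assoc, ← pow_add]; exact ha _
  have h0 : 1 - a * q ^ k ≠ 0 := sub_ne_zero.2 (ha k).symm
  have h1 : 1 - a * q ^ k * q ≠ 0 := by
    rw [mul_assoc, ← pow_succ]
    exact sub_ne_zero.2 (ha (k + 1)).symm
  have h2 : 1 - q ^ k * q ≠ 0 := by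
    simpa [mul_comm] using sub_ne_zero.2 (mul_pow_ne_one_of_norm_lt_one hq k).symm
  have hP' : qPoch q q (k + 1) = qPoch q q k * (1 - q ^ k * q) := by
    rw [mul_comm (q ^ k)]
    exact Finset.prod_range_succ _ _
  simp only [F, watsonTelescope, watsonWeight]
  rw [show a * q * q ^ k = a * q ^ (k + 1) by ring,
    show a * q ^ 2 * q ^ k = a * q ^ (k + 1 + 1) by ring,
    hshift k, hshift (k + 1), hP', watson_exponent_succ]
  simp only [pow_add, pow_one, pow_mul', mul_pow, mul_add]
  field_simp
  ring

end WatsonSeries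

/-- Functional equation for the Watson series: `f(a) = f(aq) + aq f(aq²)`. -/
theorem watson_functional_equation (q a : ℂ) (hq : ‖q‖ < 1)
    (ha : ∀ j : ℕ, a * q ^ j ≠ 1) :
    Summable (fun k : ℕ => ‖F q a k‖) ∧
    watsonF q a = watsonF q (a * q) + a * q * watsonF q (a * q ^ 2) := by
  have ha_shift (m : ℕ) (j : ℕ) : a * q ^ m * q ^ j ≠ 1 := by
    rw [mul_assoc, ← pow_add]
    exact ha _
  have hF₀ := (summable_norm_F hq ha).of_norm
  have hF₁ := (summable_norm_F hq (by simpa using ha_shift 1)).of_norm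
  have hF₂ := (summable_norm_F hq (ha_shift 2)).of_norm
  refine ⟨summable_norm_F hq ha, ?_⟩
  rw [← sub_eq_zero, watsonF, watsonF, watsonF, ← tsum_mul_left,
    ← hF₁.tsum_add (hF₂.mul_left _), ← hF₀.tsum_sub (hF₁.add (hF₂.mul_left _))]
  simp only [F_sub_eq_watsonTelescope_sub hq ha, tsum_sub_succ (summable_watsonTelescope hq ha)]
  simp [watsonTelescope]
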